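/- Stability-stack counting invariant: Consider an abstract transition system on pairs (schedule, stack) where the schedule is a list over symbols {Step, Fix(·), aFix(·)} with rules: FixInit replaces a leading Fix(sc) by sc ++ [aFix(sc)] and pushes one Boolean onto the stack; FixIter replaces a leading aFix(sc) by sc ++ [aFix(sc)] leaving stack size unchanged (pops one, pushes one); FixTerm removes a leading aFix(sc) and pops one Boolean; Step transitions remove a leading Step symbol without touching the stack. Then in every state reachable from an initial state whose schedule contains no aFix and whose stack is empty, the length of the stability stack equals the number of aFix symbols occurring in the schedule. -/

import Mathlib

/-- Schedule symbols: step executions, fixpoints, and activated fixpoints. -/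
inductive SchedSym : Type
  | step : SchedSym
  | fix : List SchedSym → SchedSym
  | afix : List SchedSym → SchedSym

mutual
/-- Number of `afix` occurrences in a symbol, including nested ones. -/
def countAFix : SchedSym → ℕ
  | SchedSym.step => 0
  | SchedSym.fix l => countAFixL l
  | SchedSym.afix l => countAFixL l + 1
/-- Number of `afix` occurrences in a schedule, including nested ones. -/
def countAFixL : List SchedSym → ℕ
  | [] => 0
  | s :: rest => countAFix s + countAFixL rest
end

/-- Transitions on (schedule, stability stack) pairs. -/
inductive SchedTrans : (List SchedSym × List Bool) → (List SchedSym × List Bool) → Prop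
  | fixInit (sc rest : List SchedSym) (stk : List Bool) (b : Bool) :
      SchedTrans (SchedSym.fix sc :: rest, stk) (sc ++ SchedSym.afix sc :: rest, b :: stk)
  | fixIter (sc rest : List SchedSym) (stk : List Bool) (b b' : Bool) :
      SchedTrans (SchedSym.afix sc :: rest, b :: stk) (sc ++ SchedSym.afix sc :: rest, b' :: stk)
  | fixTerm (sc rest : List SchedSym) (stk : List Bool) (b : Bool) :
      SchedTrans (SchedSym.afix sc :: rest, b :: stk) (rest, stk)
  | stepT (rest : List SchedSym) (stk : List Bool) :
      SchedTrans (SchedSym.step :: rest, stk) (rest, stk)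

/-!
Counting alone is not inductive: unfolding `fix sc` or `afix sc` copies the body `sc` into the
schedule, so one also needs that no body of a top-level symbol contains an `afix`. With that,
the unfolding contributes exactly one `afix` (the new marker), matching the one Boolean pushed
by `fixInit` and kept by `fixIter`, while `fixTerm` removes one marker and pops one Boolean.
-/

namespace SchedSym

def body : SchedSym → List SchedSym
  | step => []
  | fix l => l
  | afix l => l

theorem countAFixL_body_eq_zero {x : SchedSym} (h : countAFix x = 0) : countAFixL x.body = 0 := by
  cases x <;> simp_all [countAFix, countAFixL, body]

end SchedSym

theorem countAFixL_append (l₁ l₂ : List SchedSym) :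
    countAFixL (l₁ ++ l₂) = countAFixL l₁ + countAFixL l₂ := by
  induction l₁ with
  | nil => simp [countAFixL]
  | cons x l ih => simp [countAFixL, ih, Nat.add_assoc]

theorem countAFixL_eq_zero_iff {l : List SchedSym} :
    countAFixL l = 0 ↔ ∀ x ∈ l, countAFix x = 0 := by
  induction l with
  | nil => simp [countAFixL]
  | cons x l ih => simp [countAFixL, ih]

theorem countAFixL_unfold {sc : List SchedSym} (hsc : countAFixL sc = 0) (rest : List SchedSym) :
    countAFixL (sc ++ SchedSym.afix sc :: rest) = countAFixL rest + 1 := by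
  simp only [countAFixL_append, countAFixL, countAFix, hsc]
  omega

theorem forall_countAFixL_body_unfold {sc rest : List SchedSym} (hsc : countAFixL sc = 0)
    (hrest : ∀ x ∈ rest, countAFixL x.body = 0) :
    ∀ x ∈ sc ++ SchedSym.afix sc :: rest, countAFixL x.body = 0 := by
  intro x hx
  rcases List.mem_append.1 hx with hx | hx | ⟨_, hx⟩
  · exact SchedSym.countAFixL_body_eq_zero (countAFixL_eq_zero_iff.1 hsc x hx)
  · exact hsc
  · exact hrest x hx

def WellFormedState (s : List SchedSym × List Bool) : Prop :=
  (∀ x ∈ s.1, countAFixL x.body = 0) ∧ s.2.length = countAFixL s.1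

theorem wellFormedState_init {sched : List SchedSym} (h : countAFixL sched = 0) :
    WellFormedState (sched, []) :=
  ⟨fun x hx => SchedSym.countAFixL_body_eq_zero (countAFixL_eq_zero_iff.1 h x hx), h.symm⟩

theorem SchedTrans.wellFormedState {s t : List SchedSym × List Bool} (hst : SchedTrans s t)
    (hs : WellFormedState s) : WellFormedState t := by
  obtain ⟨hbody, hlen⟩ := hs
  have hrest : ∀ x ∈ s.1.tail, countAFixL x.body = 0 := fun x hx =>
    hbody x (List.mem_of_mem_tail hx)
  cases hst with
  | fixInit sc rest stk b =>
    have hsc : countAFixL sc = 0 := hbody _ List.mem_cons_self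
    refine ⟨forall_countAFixL_body_unfold hsc hrest, ?_⟩
    simp only [countAFixL, countAFix, hsc, zero_add] at hlen
    simp only [countAFixL_unfold hsc, List.length_cons, hlen]
  | fixIter sc rest stk b b' =>
    have hsc : countAFixL sc = 0 := hbody _ List.mem_cons_self
    refine ⟨forall_countAFixL_body_unfold hsc hrest, hlen.trans ?_⟩
    simp only [countAFixL, countAFix, hsc, countAFixL_unfold hsc]
    omega
  | fixTerm sc rest stk b =>
    have hsc : countAFixL sc = 0 := hbody _ List.mem_cons_self
    refine ⟨hrest, ?_⟩
    simp only [countAFixL, countAFix, hsc, List.length_cons] at hlen ⊢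
    omega
  | stepT rest stk =>
    refine ⟨hrest, ?_⟩
    simpa only [countAFixL, countAFix, zero_add] using hlen

/-- Stability-stack counting invariant: from an initial state whose schedule contains no
`afix` and whose stack is empty, every reachable state has stack length equal to the
number of `afix` occurrences in its schedule. -/
theorem stability_stack_invariant
    (sched₀ : List SchedSym) (h0 : countAFixL sched₀ = 0)
    (s : List SchedSym × List Bool)
    (hs : Relation.ReflTransGen SchedTrans (sched₀, []) s) :
    s.2.length = countAFixL s.1 := by
  suffices WellFormedState s from this.2
  induction hs with
  | refl => exact wellFormedState_init h0
  | tail _ hstep ih => exact hstep.wellFormedState ih
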